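/- Consider the semidefinite program combining Alice's cheating SDPs for bit commitment, weak coin flipping, and oblivious transfer with a shared first message: maximize (1/3)·Σ_{y∈{0,1}}(1/2)⟨φ_y|σ_y^{BC}|φ_y⟩ + (1/3)·[(1/2)⟨σ₀^{WCF},P₀⟩ + (1/2)⟨σ₁^{WCF},P₁⟩] + (1/3)·⟨σ^{OT}, P_accept⟩ over density matrices σ₀^{BC}, σ₁^{BC} on ℂ³⊗ℂ³, σ₀^{WCF}, σ₁^{WCF} on ℂ²⊗(ℂ³)^{⊗4}, σ^{OT} on (ℂ²)^{⊗4}, and σ_B on ℂ³, subject to: Tr_A(σ₀^{BC}) = Tr_A(σ₁^{BC}) = σ_B; Tr_{Y,A₀,A₁}(σ₀^{WCF}) = Tr_{Y,A₀,A₁}(σ₁^{WCF}) with Tr_{B₁} of this common marginal equal to σ_B; and Tr_{G₀,G₁}(σ^{OT}) = Tr_B(U₂(|ψ⟩⟨ψ| ⊗ σ_B)U₂†), where the operators P₀, P₁, P_accept, U₂ and the state |ψ⟩ are as in the individual SDPs (P₀ = Σ_y |y⟩⟨y|⊗|φ_y⟩⟨φ_y|_{A₀B₀}⊗1_{A₁}⊗|2⟩⟨2|_{B₁},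 P₁ = Σ_y |y⟩⟨y|⊗1_{A₀}⊗|2⟩⟨2|_{B₀}⊗|φ_y⟩⟨φ_y|_{A₁B₁}, |ψ⟩ = (1/2)Σ_{x₀,x₁}|x₀x₁⟩, U₂ = Σ_{x₀,x₁}|x₀x₁⟩⟨x₀x₁|⊗diag((−1)^{x₀},(−1)^{x₁},1), P_accept = Σ_{x₀,x₁}|x₀x₁⟩⟨x₀x₁|⊗|x₀x₁⟩⟨x₀x₁|). Its optimal value v satisfies 0.7177 ≤ v ≤ 0.7178; in particular v < 3/4. -/

import Mathlib

/-! STATEMENT 10: Alice's optimal cheating probability in the three-way stochastic switch protocol (bit commitment / weak coin flipping / oblivious transfer) lies in [0.7177, 0.7178]; in particular it is strictly below 3/4. -/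

open Matrix
open scoped Matrix BigOperators ComplexOrder

noncomputable section

/-- Square matrices over ℂ indexed by `α`. -/
abbrev Mat (α : Type) : Type := Matrix α α ℂ

/-- A density matrix: positive semidefinite with unit trace. -/
def IsDensity {α : Type} [Fintype α] [DecidableEq α] (ρ : Mat α) : Prop :=
  ρ.PosSemidef ∧ ρ.trace = 1

/-- Hilbert–Schmidt inner product ⟨P, Q⟩ = Tr(P† Q). -/
def hs {α : Type} [Fintype α] (P Q : Mat α) : ℂ := (Pᴴ * Q).trace

/-- Outer product |v⟩⟨v|. -/
def outer {α : Type} (v : α → ℂ) : Mat α := fun i j => v i * star (v j)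

/-- Standard basis vector |i⟩. -/
def ket {α : Type} [DecidableEq α] (i : α) : α → ℂ := fun j => if j = i then 1 else 0

/-- The embedding of Fin 2 into Fin 3. -/
def f23 (y : Fin 2) : Fin 3 := ⟨y.val, by omega⟩

/-- |φ_y⟩ = (|yy⟩ + |22⟩)/√2 ∈ ℂ³ ⊗ ℂ³. -/
def phi (y : Fin 2) : Fin 3 × Fin 3 → ℂ :=
  fun p => (ket (f23 y, f23 y) p + ket ((2 : Fin 3), (2 : Fin 3)) p) / (Real.sqrt 2 : ℂ)

/-- Partial trace over the first tensor factor. -/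
def ptrA {α β : Type} [Fintype α] (ρ : Mat (α × β)) : Mat β :=
  fun b b' => ∑ a, ρ (a, b) (a, b')

/-- |ψ⟩ = (1/2) Σ_{x₀,x₁} |x₀x₁⟩ ∈ X₀ ⊗ X₁. -/
def psiX : Fin 2 × Fin 2 → ℂ := fun _ => 1/2

/-- U_{x₀x₁} = diag((−1)^{x₀}, (−1)^{x₁}, 1) as a diagonal entry function. -/
def Udiag (x0 x1 : Fin 2) (b : Fin 3) : ℂ :=
  if b = 0 then (-1) ^ (x0 : ℕ) else if b = 1 then (-1) ^ (x1 : ℕ) else 1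

/-- U₂ = Σ_{x₀,x₁} |x₀x₁⟩⟨x₀x₁| ⊗ U_{x₀x₁}, acting on X₀ ⊗ X₁ ⊗ B. -/
def U2 : Mat (Fin 2 × Fin 2 × Fin 3) :=
  Matrix.diagonal fun p => Udiag p.1 p.2.1 p.2.2

/-- The state |ψ⟩⟨ψ| ⊗ σ_B on X₀ ⊗ X₁ ⊗ B. -/
def inState (σB : Mat (Fin 3)) : Mat (Fin 2 × Fin 2 × Fin 3) :=
  fun p q => outer psiX (p.1, p.2.1) (q.1, q.2.1) * σB p.2.2 q.2.2

/-- Partial trace over B, the last factor of X₀ ⊗ X₁ ⊗ B. -/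
def trB (ρ : Mat (Fin 2 × Fin 2 × Fin 3)) : Mat (Fin 2 × Fin 2) :=
  fun p q => ∑ b, ρ (p.1, p.2, b) (q.1, q.2, b)

/-- Partial trace over G₀ and G₁, the last two factors of X₀ ⊗ X₁ ⊗ G₀ ⊗ G₁. -/
def trG01 (σ : Mat (Fin 2 × Fin 2 × Fin 2 × Fin 2)) : Mat (Fin 2 × Fin 2) :=
  fun p q => ∑ g0, ∑ g1, σ (p.1, p.2, g0, g1) (q.1, q.2, g0, g1)

/-- P_accept = Σ_{x₀,x₁} |x₀x₁⟩⟨x₀x₁|_{X₀⊗X₁} ⊗ |x₀x₁⟩⟨x₀x₁|_{G₀⊗G₁}. -/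
def Pacc : Mat (Fin 2 × Fin 2 × Fin 2 × Fin 2) := fun p q =>
  match p, q with
  | (x0, x1, g0, g1), (x0', x1', g0', g1') =>
    ∑ u0 : Fin 2, ∑ u1 : Fin 2,
      ket (u0, u1) (x0, x1) * star (ket (u0, u1) (x0', x1')) *
      (ket (u0, u1) (g0, g1) * star (ket (u0, u1) (g0', g1')))

/-- The constraint Tr_{G₀,G₁}(σ) = Tr_B(U₂(|ψ⟩⟨ψ| ⊗ σ_B)U₂†). -/
def OTconstraint (σ : Mat (Fin 2 × Fin 2 × Fin 2 × Fin 2)) (σB : Mat (Fin 3)) : Prop :=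
  trG01 σ = trB (U2 * inState σB * U2ᴴ)

/-- Index for Y ⊗ A₀ ⊗ B₀ ⊗ A₁ ⊗ B₁. -/
abbrev I5 : Type := Fin 2 × Fin 3 × Fin 3 × Fin 3 × Fin 3

/-- P₀ = Σ_y |y⟩⟨y|_Y ⊗ |φ_y⟩⟨φ_y|_{A₀⊗B₀} ⊗ 1_{A₁} ⊗ |2⟩⟨2|_{B₁}. -/
def P0w : Mat I5 := fun p q =>
  match p, q with
  | (y, a0, b0, a1, b1), (y', a0', b0', a1', b1') =>
    ∑ u : Fin 2, ket u y * star (ket u y') *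
      (phi u (a0, b0) * star (phi u (a0', b0'))) *
      (if a1 = a1' then 1 else 0) *
      (ket (2 : Fin 3) b1 * star (ket (2 : Fin 3) b1'))

/-- P₁ = Σ_y |y⟩⟨y|_Y ⊗ 1_{A₀} ⊗ |2⟩⟨2|_{B₀} ⊗ |φ_y⟩⟨φ_y|_{A₁⊗B₁}. -/
def P1w : Mat I5 := fun p q =>
  match p, q with
  | (y, a0, b0, a1, b1), (y', a0', b0', a1', b1') =>
    ∑ u : Fin 2, ket u y * star (ket u y') *
      (if a0 = a0' then 1 else 0) *
      (ket (2 : Fin 3) b0 * star (ket (2 : Fin 3) b0')) *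
      (phi u (a1, b1) * star (phi u (a1', b1')))

/-- Partial trace over Y, A₀ and A₁, onto B₀ ⊗ B₁. -/
def trYA (ρ : Mat I5) : Mat (Fin 3 × Fin 3) :=
  fun p q => ∑ y, ∑ a0, ∑ a1,
    ρ (y, a0, p.1, a1, p.2) (y, a0, q.1, a1, q.2)

/-- Partial trace over B₁, the second factor of B₀ ⊗ B₁. -/
def trB1 (ρ : Mat (Fin 3 × Fin 3)) : Mat (Fin 3) :=
  fun b b' => ∑ b1, ρ (b, b1) (b', b1)

/-!
Upper bound: every term of the objective is `⟨v|σ|v⟩` for a positive semidefinite `σ` and a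
vector `v` that is a sum of two or three basis-like vectors, and the AM–GM bound
`⟨v + w|σ|v + w⟩ ≤ (1 + t) ⟨v|σ|v⟩ + (1 + t⁻¹) ⟨w|σ|w⟩` bounds it by diagonal entries of `σ`.
The marginal constraints turn all of these into diagonal entries of `Tr_{Y,A₀,A₁} σ₀ʷ`, a
probability vector, and the resulting linear form has all coefficients below `0.71778`. For the
oblivious-transfer term, `|x₀x₁⟩` is expanded in the four characters of `(ℤ/2)²`: three of them
are the diagonals of the `U_{x₀x₁}`, so the constraint fixes their weight in the `G`-blocks of `σ`
through `σ_B`, and it forces the fourth into the kernel of every block.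

Lower bound: an explicit feasible point with rational amplitudes has value
`235799/328536 > 0.7177`.
-/

theorem Matrix.PosSemidef.re_apply_self_nonneg {α : Type} {σ : Mat α} (hσ : σ.PosSemidef)
    (i : α) : 0 ≤ (σ i i).re :=
  (Complex.nonneg_iff.mp hσ.diag_nonneg).1

section QuadForm

variable {α : Type} [Fintype α]

def quadForm (σ : Mat α) (v : α → ℂ) : ℝ := (star v ⬝ᵥ σ *ᵥ v).re

theorem Matrix.PosSemidef.quadForm_nonneg {σ : Mat α} (hσ : σ.PosSemidef) (v : α → ℂ) :
    0 ≤ quadForm σ v :=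
  (Complex.nonneg_iff.mp (hσ.dotProduct_mulVec_nonneg v)).1

theorem quadForm_smul (σ : Mat α) (c : ℂ) (v : α → ℂ) :
    quadForm σ (c • v) = Complex.normSq c * quadForm σ v := by
  simp only [quadForm, star_smul, mulVec_smul, dotProduct_smul, smul_dotProduct, smul_eq_mul,
    Complex.star_def]
  rw [← mul_assoc, mul_comm c, ← Complex.normSq_eq_conj_mul_self, Complex.re_ofReal_mul]

theorem quadForm_neg (σ : Mat α) (v : α → ℂ) : quadForm σ (-v) = quadForm σ v := by
  simp only [quadForm, star_neg, mulVec_neg, dotProduct_neg, neg_dotProduct, neg_neg]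

theorem quadForm_add (σ : Mat α) (v w : α → ℂ) :
    quadForm σ (v + w) = quadForm σ v + quadForm σ w
      + (star v ⬝ᵥ σ *ᵥ w + star w ⬝ᵥ σ *ᵥ v).re := by
  simp only [quadForm, star_add, mulVec_add, dotProduct_add, add_dotProduct, Complex.add_re]
  ring

theorem quadForm_sum {ι : Type} (s : Finset ι) (σ : ι → Mat α) (v : α → ℂ) :
    quadForm (∑ i ∈ s, σ i) v = ∑ i ∈ s, quadForm (σ i) v := by
  simp only [quadForm, Matrix.sum_mulVec, dotProduct_sum, Complex.re_sum]

/-- The cross term is controlled by `0 ≤ quadForm σ (t • v - w)`. -/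
theorem Matrix.PosSemidef.quadForm_add_le {σ : Mat α} (hσ : σ.PosSemidef) {t : ℝ} (ht : 0 < t)
    (v w : α → ℂ) :
    quadForm σ (v + w) ≤ (1 + t) * quadForm σ v + (1 + t⁻¹) * quadForm σ w := by
  have h := hσ.quadForm_nonneg ((t : ℂ) • v + -w)
  rw [quadForm_add, quadForm_smul, quadForm_neg, Complex.normSq_ofReal] at h
  simp only [star_smul, mulVec_smul, dotProduct_smul, smul_dotProduct, smul_eq_mul,
    Complex.star_def, Complex.conj_ofReal, star_neg, mulVec_neg, dotProduct_neg,
    neg_dotProduct] at h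
  rw [← mul_neg, ← mul_add, ← neg_add, mul_neg, Complex.neg_re, Complex.re_ofReal_mul] at h
  have hcross : (star v ⬝ᵥ σ *ᵥ w + star w ⬝ᵥ σ *ᵥ v).re
      ≤ t * quadForm σ v + t⁻¹ * quadForm σ w := by
    refine le_of_mul_le_mul_left ?_ ht
    rw [mul_add, ← mul_assoc, ← mul_assoc, mul_inv_cancel₀ ht.ne', one_mul]
    linarith
  rw [quadForm_add]
  linarith

theorem Matrix.PosSemidef.quadForm_add_add_le {σ : Mat α} (hσ : σ.PosSemidef) {t : ℝ}
    (ht : 0 < t) (u v w : α → ℂ) :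
    quadForm σ (u + v + w)
      ≤ (2 + t) * (quadForm σ u + quadForm σ v) + (1 + 2 / t) * quadForm σ w := by
  have huv := hσ.quadForm_add_le one_pos u v
  have h := hσ.quadForm_add_le (half_pos ht) (u + v) w
  rw [inv_one] at huv
  rw [inv_div] at h
  calc quadForm σ (u + v + w) ≤ _ := h
    _ ≤ (1 + t / 2) * ((1 + 1) * quadForm σ u + (1 + 1) * quadForm σ v)
        + (1 + 2 / t) * quadForm σ w := by gcongr
    _ = _ := by ring

theorem Matrix.PosSemidef.quadForm_add_of_quadForm_eq_zero {σ : Mat α} (hσ : σ.PosSemidef)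
    {w : α → ℂ} (hw : quadForm σ w = 0) (v : α → ℂ) : quadForm σ (v + w) = quadForm σ v := by
  have hz : star w ⬝ᵥ σ *ᵥ w = 0 :=
    Complex.ext hw (Complex.nonneg_iff.mp (hσ.dotProduct_mulVec_nonneg w)).2.symm
  have hker : σ *ᵥ w = 0 := (hσ.dotProduct_mulVec_zero_iff w).mp hz
  have hker' : star w ⬝ᵥ σ *ᵥ v = 0 := by
    rw [dotProduct_mulVec, ← hσ.1.eq, ← star_mulVec, hker, star_zero, zero_dotProduct]
  rw [quadForm_add, hw, hker', hker, dotProduct_zero]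
  simp

theorem outer_eq_vecMulVec {β : Type} (v : β → ℂ) : outer v = vecMulVec v (star v) := rfl

theorem outer_posSemidef (v : α → ℂ) : (outer v).PosSemidef :=
  posSemidef_vecMulVec_self_star v

theorem isDensity_outer [DecidableEq α] {v : α → ℂ} (hv : v ⬝ᵥ star v = 1) :
    IsDensity (outer v) :=
  ⟨outer_posSemidef v, by rw [outer_eq_vecMulVec, trace_vecMulVec, hv]⟩

theorem re_hs_outer_left (v : α → ℂ) (σ : Mat α) : (hs (outer v) σ).re = quadForm σ v := by
  rw [quadForm, hs, outer_eq_vecMulVec, conjTranspose_vecMulVec, star_star, vecMulVec_mul,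
    trace_vecMulVec, dotProduct_comm, dotProduct_mulVec]

theorem Matrix.IsHermitian.re_hs_outer_right {σ : Mat α} (hσ : σ.IsHermitian) (v : α → ℂ) :
    (hs σ (outer v)).re = quadForm σ v := by
  rw [quadForm, hs, hσ.eq, outer_eq_vecMulVec, mul_vecMulVec, trace_vecMulVec, dotProduct_comm]

theorem hs_sum_right {ι : Type} (s : Finset ι) (σ : Mat α) (M : ι → Mat α) :
    hs σ (∑ i ∈ s, M i) = ∑ i ∈ s, hs σ (M i) := by
  simp only [hs, Matrix.mul_sum, trace_sum]

theorem quadForm_outer (w v : α → ℂ) : quadForm (outer w) v = Complex.normSq (star w ⬝ᵥ v) := by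
  rw [quadForm, outer_eq_vecMulVec, vecMulVec_mulVec, dotProduct_smul, op_smul_eq_mul,
    star_dotProduct, Complex.star_def, ← Complex.normSq_eq_conj_mul_self, Complex.ofReal_re]

end QuadForm

section Kets

variable {α : Type} [DecidableEq α]

theorem ket_eq_single (i : α) : ket i = Pi.single i 1 := by
  funext j
  simp [ket, Pi.single_apply]

theorem star_ket (i j : α) : star (ket i j) = ket i j := by
  simp [ket, apply_ite star]

theorem ket_prod_apply {β : Type} [DecidableEq β] (a : α) (b : β) (x : α) (y : β) :
    ket (a, b) (x, y) = ket a x * ket b y := by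
  simp only [ket, Prod.mk.injEq, ite_and, ite_mul, one_mul, zero_mul]

theorem sum_ket_mul_ket [Fintype α] (i j : α) :
    ∑ c, ket c i * ket c j = if i = j then 1 else 0 := by
  simp [ket]

theorem quadForm_ket [Fintype α] (σ : Mat α) (i : α) : quadForm σ (ket i) = (σ i i).re := by
  simp [quadForm, ket_eq_single]

end Kets

section PlusVec

variable {α : Type} [Fintype α] [DecidableEq α]

def plusVec (i j : α) : α → ℂ := (Real.sqrt 2 : ℂ)⁻¹ • (ket i + ket j)

def plusProj {κ : Type} [Fintype κ] (p q : κ → α) : Mat α := ∑ k, outer (plusVec (p k) (q k))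

theorem normSq_inv_sqrt_two : Complex.normSq (Real.sqrt 2 : ℂ)⁻¹ = 1 / 2 := by
  rw [map_inv₀, Complex.normSq_ofReal, Real.mul_self_sqrt zero_le_two, one_div]

theorem star_plusVec_dotProduct (i j : α) (w : α → ℂ) :
    star (plusVec i j) ⬝ᵥ w = (Real.sqrt 2 : ℂ)⁻¹ * (w i + w j) := by
  simp [plusVec, ket_eq_single, star_smul, Complex.conj_ofReal, mul_add]

theorem dotProduct_plusVec (w : α → ℂ) (i j : α) :
    w ⬝ᵥ plusVec i j = (Real.sqrt 2 : ℂ)⁻¹ * (w i + w j) := by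
  simp only [plusVec, dotProduct_smul, dotProduct_add, ket_eq_single, dotProduct_single, mul_one,
    smul_eq_mul]

theorem Matrix.PosSemidef.quadForm_plusVec_le {σ : Mat α} (hσ : σ.PosSemidef) {t : ℝ}
    (ht : 0 < t) (i j : α) :
    quadForm σ (plusVec i j) ≤ ((1 + t) * (σ i i).re + (1 + t⁻¹) * (σ j j).re) / 2 := by
  have h := hσ.quadForm_add_le ht (ket i) (ket j)
  rw [quadForm_ket, quadForm_ket] at h
  rw [plusVec, quadForm_smul, normSq_inv_sqrt_two]
  linarith

variable {κ : Type} [Fintype κ]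

theorem Matrix.PosSemidef.re_hs_plusProj_le {σ : Mat α} (hσ : σ.PosSemidef) {t : ℝ}
    (ht : 0 < t) (p q : κ → α) :
    (hs σ (plusProj p q)).re
      ≤ ∑ k, ((1 + t) * (σ (p k) (p k)).re + (1 + t⁻¹) * (σ (q k) (q k)).re) / 2 := by
  rw [plusProj, hs_sum_right, Complex.re_sum]
  refine Finset.sum_le_sum fun k _ => ?_
  rw [hσ.1.re_hs_outer_right]
  exact hσ.quadForm_plusVec_le ht _ _

theorem re_hs_outer_plusProj (w : α → ℂ) (p q : κ → α) :
    (hs (outer w) (plusProj p q)).re = ∑ k, Complex.normSq (w (p k) + w (q k)) / 2 := by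
  rw [re_hs_outer_left, plusProj]
  simp only [quadForm_sum, quadForm_outer, star_plusVec_dotProduct, map_mul, normSq_inv_sqrt_two,
    one_div_mul_eq_div]

end PlusVec

section BitCommitment

@[simp] theorem f23_zero : f23 0 = 0 := rfl

@[simp] theorem f23_one : f23 1 = 1 := rfl

theorem phi_eq_plusVec (y : Fin 2) : phi y = plusVec (f23 y, f23 y) (2, 2) := by
  funext p
  simp [phi, plusVec, div_eq_inv_mul]

theorem star_phi (y : Fin 2) (p : Fin 3 × Fin 3) : star (phi y p) = phi y p := by
  simp [phi, star_ket, Complex.conj_ofReal]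

theorem Matrix.PosSemidef.re_apply_le_re_ptrA {α β : Type} [Fintype α] [Fintype β]
    {σ : Mat (α × β)} (hσ : σ.PosSemidef) (a : α) (b : β) :
    (σ (a, b) (a, b)).re ≤ (ptrA σ b b).re := by
  rw [ptrA, Complex.re_sum]
  exact Finset.single_le_sum (fun a _ => hσ.re_apply_self_nonneg (a, b)) (Finset.mem_univ a)

theorem Matrix.PosSemidef.re_hs_outer_phi_le {σ : Mat (Fin 3 × Fin 3)} (hσ : σ.PosSemidef)
    {t : ℝ} (ht : 0 < t) (y : Fin 2) :
    (hs (outer (phi y)) σ).re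
      ≤ ((1 + t) * (ptrA σ (f23 y) (f23 y)).re + (1 + t⁻¹) * (ptrA σ 2 2).re) / 2 := by
  rw [re_hs_outer_left, phi_eq_plusVec]
  calc quadForm σ _ ≤ _ := hσ.quadForm_plusVec_le ht _ _
    _ ≤ _ := by
      gcongr ((1 + t) * ?_ + (1 + t⁻¹) * ?_) / 2 <;> exact hσ.re_apply_le_re_ptrA _ _

end BitCommitment

section CoinFlipping

theorem P0w_eq_plusProj :
    P0w = plusProj (fun k : Fin 2 × Fin 3 => (k.1, f23 k.1, f23 k.1, k.2, 2))
      (fun k => (k.1, 2, 2, k.2, 2)) := by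
  have hvec : ∀ (u : Fin 2) (c : Fin 3) (i : I5),
      plusVec (u, f23 u, f23 u, c, 2) (u, 2, 2, c, 2) i
        = ket u i.1 * phi u (i.2.1, i.2.2.1) * ket c i.2.2.2.1 * ket 2 i.2.2.2.2 := by
    rintro u c ⟨y, a0, b0, a1, b1⟩
    simp only [plusVec, phi_eq_plusVec, Pi.smul_apply, Pi.add_apply, ket_prod_apply, smul_eq_mul]
    ring
  ext ⟨y, a0, b0, a1, b1⟩ ⟨y', a0', b0', a1', b1'⟩
  simp only [P0w, plusProj, Matrix.sum_apply, outer, Fintype.sum_prod_type, hvec,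
    ← sum_ket_mul_ket, Finset.mul_sum, Finset.sum_mul, star_mul', star_ket, star_phi]
  refine Finset.sum_congr rfl fun u _ => Finset.sum_congr rfl fun c _ => ?_
  ring

theorem P1w_eq_plusProj :
    P1w = plusProj (fun k : Fin 2 × Fin 3 => (k.1, k.2, 2, f23 k.1, f23 k.1))
      (fun k => (k.1, k.2, 2, 2, 2)) := by
  have hvec : ∀ (u : Fin 2) (c : Fin 3) (i : I5),
      plusVec (u, c, 2, f23 u, f23 u) (u, c, 2, 2, 2) i
        = ket u i.1 * ket c i.2.1 * ket 2 i.2.2.1 * phi u (i.2.2.2.1, i.2.2.2.2) := by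
    rintro u c ⟨y, a0, b0, a1, b1⟩
    simp only [plusVec, phi_eq_plusVec, Pi.smul_apply, Pi.add_apply, ket_prod_apply, smul_eq_mul]
    ring
  ext ⟨y, a0, b0, a1, b1⟩ ⟨y', a0', b0', a1', b1'⟩
  simp only [P1w, plusProj, Matrix.sum_apply, outer, Fintype.sum_prod_type, hvec,
    ← sum_ket_mul_ket, Finset.mul_sum, Finset.sum_mul, star_mul', star_ket, star_phi]
  refine Finset.sum_congr rfl fun u _ => Finset.sum_congr rfl fun c _ => ?_
  ring

theorem Matrix.PosSemidef.re_trYA_apply_self_nonneg {σ : Mat I5} (hσ : σ.PosSemidef)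
    (p : Fin 3 × Fin 3) : 0 ≤ (trYA σ p p).re := by
  simp only [trYA, Complex.re_sum]
  exact Finset.sum_nonneg fun _ _ => Finset.sum_nonneg fun _ _ => Finset.sum_nonneg fun _ _ =>
    hσ.re_apply_self_nonneg _

theorem Matrix.PosSemidef.sum_re_le_re_trYA {σ : Mat I5} (hσ : σ.PosSemidef) {κ : Type}
    [Fintype κ] {e : κ → Fin 2 × Fin 3 × Fin 3} (he : e.Injective) (b0 b1 : Fin 3) :
    ∑ k, (σ ((e k).1, (e k).2.1, b0, (e k).2.2, b1) ((e k).1, (e k).2.1, b0, (e k).2.2, b1)).re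
      ≤ (trYA σ (b0, b1) (b0, b1)).re := by
  have h : (trYA σ (b0, b1) (b0, b1)).re = ∑ x : Fin 2 × Fin 3 × Fin 3,
      (σ (x.1, x.2.1, b0, x.2.2, b1) (x.1, x.2.1, b0, x.2.2, b1)).re := by
    simp only [trYA, Complex.re_sum, Fintype.sum_prod_type]
  rw [h]
  have := Finset.sum_le_univ_sum_of_nonneg (s := Finset.univ.map ⟨e, he⟩)
    (f := fun x => (σ (x.1, x.2.1, b0, x.2.2, b1) (x.1, x.2.1, b0, x.2.2, b1)).re)
    fun x => hσ.re_apply_self_nonneg _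
  rwa [Finset.sum_map] at this

theorem Matrix.PosSemidef.re_hs_P0w_le {σ : Mat I5} (hσ : σ.PosSemidef) {t : ℝ} (ht : 0 < t) :
    (hs σ P0w).re ≤ ((1 + t) * ((trYA σ (0, 2) (0, 2)).re + (trYA σ (1, 2) (1, 2)).re)
      + (1 + t⁻¹) * (trYA σ (2, 2) (2, 2)).re) / 2 := by
  have h₁ : ∑ k : Fin 2 × Fin 3,
      (σ (k.1, f23 k.1, f23 k.1, k.2, 2) (k.1, f23 k.1, f23 k.1, k.2, 2)).re
      ≤ (trYA σ (0, 2) (0, 2)).re + (trYA σ (1, 2) (1, 2)).re := by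
    rw [Fintype.sum_prod_type, Fin.sum_univ_two]
    exact add_le_add
      (hσ.sum_re_le_re_trYA (e := fun c => (0, 0, c)) (by simp [Function.Injective]) 0 2)
      (hσ.sum_re_le_re_trYA (e := fun c => (1, 1, c)) (by simp [Function.Injective]) 1 2)
  have h₂ : ∑ k : Fin 2 × Fin 3, (σ (k.1, 2, 2, k.2, 2) (k.1, 2, 2, k.2, 2)).re
      ≤ (trYA σ (2, 2) (2, 2)).re :=
    hσ.sum_re_le_re_trYA (e := fun k : Fin 2 × Fin 3 => (k.1, 2, k.2))
      (by simp [Function.Injective]) 2 2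
  rw [P0w_eq_plusProj]
  refine (hσ.re_hs_plusProj_le ht _ _).trans ?_
  rw [← Finset.sum_div, Finset.sum_add_distrib, ← Finset.mul_sum, ← Finset.mul_sum]
  gcongr ((1 + t) * ?_ + (1 + t⁻¹) * ?_) / 2

theorem Matrix.PosSemidef.re_hs_P1w_le {σ : Mat I5} (hσ : σ.PosSemidef) {t : ℝ} (ht : 0 < t) :
    (hs σ P1w).re ≤ ((1 + t) * ((trYA σ (2, 0) (2, 0)).re + (trYA σ (2, 1) (2, 1)).re)
      + (1 + t⁻¹) * (trYA σ (2, 2) (2, 2)).re) / 2 := by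
  have h₁ : ∑ k : Fin 2 × Fin 3,
      (σ (k.1, k.2, 2, f23 k.1, f23 k.1) (k.1, k.2, 2, f23 k.1, f23 k.1)).re
      ≤ (trYA σ (2, 0) (2, 0)).re + (trYA σ (2, 1) (2, 1)).re := by
    rw [Fintype.sum_prod_type, Fin.sum_univ_two]
    exact add_le_add
      (hσ.sum_re_le_re_trYA (e := fun c => (0, c, 0)) (by simp [Function.Injective]) 2 0)
      (hσ.sum_re_le_re_trYA (e := fun c => (1, c, 1)) (by simp [Function.Injective]) 2 1)
  have h₂ : ∑ k : Fin 2 × Fin 3, (σ (k.1, k.2, 2, 2, 2) (k.1, k.2, 2, 2, 2)).re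
      ≤ (trYA σ (2, 2) (2, 2)).re :=
    hσ.sum_re_le_re_trYA (e := fun k : Fin 2 × Fin 3 => (k.1, k.2, 2))
      (by simp [Function.Injective]) 2 2
  rw [P1w_eq_plusProj]
  refine (hσ.re_hs_plusProj_le ht _ _).trans ?_
  rw [← Finset.sum_div, Finset.sum_add_distrib, ← Finset.mul_sum, ← Finset.mul_sum]
  gcongr ((1 + t) * ?_ + (1 + t⁻¹) * ?_) / 2

end CoinFlipping

section ObliviousTransfer

def chi (b : Fin 3) (x : Fin 2 × Fin 2) : ℂ := Udiag x.1 x.2 b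

def chiXor (x : Fin 2 × Fin 2) : ℂ := (-1) ^ (x.1 : ℕ) * (-1) ^ (x.2 : ℕ)

theorem ket_eq_sum_chi (g : Fin 2 × Fin 2) :
    ket g = ∑ b, (chi b g / 4) • chi b + (chiXor g / 4) • chiXor := by
  funext x
  fin_cases g <;> fin_cases x <;> simp [chi, chiXor, Udiag, ket, Fin.sum_univ_three] <;> norm_num

theorem normSq_chi_div_four (b : Fin 3) (g : Fin 2 × Fin 2) :
    Complex.normSq (chi b g / 4) = 1 / 16 := by
  fin_cases b <;> fin_cases g <;> simp [chi, Udiag] <;> norm_num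

theorem trB_U2_inState (σB : Mat (Fin 3)) :
    trB (U2 * inState σB * U2ᴴ) = ∑ b, (σB b b / 4) • outer (chi b) := by
  ext x x'
  simp only [trB, U2, diagonal_conjTranspose, diagonal_mul, mul_diagonal, inState, outer, psiX,
    Matrix.sum_apply, Matrix.smul_apply, chi, Pi.star_apply, smul_eq_mul]
  refine Finset.sum_congr rfl fun b _ => ?_
  rw [show star (1 / 2 : ℂ) = 1 / 2 by norm_num]
  ring

theorem quadForm_trB_chi (σB : Mat (Fin 3)) (k : Fin 3) :
    quadForm (trB (U2 * inState σB * U2ᴴ)) (chi k) = 4 * (σB k k).re := by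
  rw [trB_U2_inState]
  fin_cases k <;>
    simp [quadForm, chi, Udiag, Fin.sum_univ_three, dotProduct, mulVec, Fintype.sum_prod_type,
      outer] <;> ring

theorem quadForm_trB_chiXor (σB : Mat (Fin 3)) :
    quadForm (trB (U2 * inState σB * U2ᴴ)) chiXor = 0 := by
  rw [trB_U2_inState]
  simp [quadForm, chi, chiXor, Udiag, Fin.sum_univ_three, dotProduct, mulVec,
    Fintype.sum_prod_type, outer]
  ring

def blockG (σ : Mat (Fin 2 × Fin 2 × Fin 2 × Fin 2)) (g : Fin 2 × Fin 2) :
    Mat (Fin 2 × Fin 2) :=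
  σ.submatrix (fun x => (x.1, x.2, g.1, g.2)) (fun x => (x.1, x.2, g.1, g.2))

theorem trG01_eq_sum_blockG (σ : Mat (Fin 2 × Fin 2 × Fin 2 × Fin 2)) :
    trG01 σ = ∑ g, blockG σ g := by
  ext x x'
  simp [trG01, blockG, Matrix.sum_apply, Fintype.sum_prod_type]

theorem Pacc_eq_sum_outer : Pacc = ∑ g : Fin 2 × Fin 2, outer (ket (g.1, g.2, g.1, g.2)) := by
  ext ⟨x0, x1, g0, g1⟩ ⟨x0', x1', g0', g1'⟩
  simp only [Pacc, Matrix.sum_apply, outer, Fintype.sum_prod_type, ket_prod_apply, star_mul',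
    star_ket]
  refine Finset.sum_congr rfl fun u0 _ => Finset.sum_congr rfl fun u1 _ => ?_
  ring

theorem Matrix.IsHermitian.re_hs_Pacc {σ : Mat (Fin 2 × Fin 2 × Fin 2 × Fin 2)}
    (hσ : σ.IsHermitian) : (hs σ Pacc).re = ∑ g, quadForm (blockG σ g) (ket g) := by
  simp only [Pacc_eq_sum_outer, hs_sum_right, Complex.re_sum, hσ.re_hs_outer_right]
  exact Finset.sum_congr rfl fun g _ =>
    (quadForm_ket σ _).trans (quadForm_ket (blockG σ g) g).symm

theorem Matrix.PosSemidef.re_hs_Pacc_le {σ : Mat (Fin 2 × Fin 2 × Fin 2 × Fin 2)}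
    {σB : Mat (Fin 3)} (hσ : σ.PosSemidef) (hOT : OTconstraint σ σB) {t : ℝ} (ht : 0 < t) :
    (hs σ Pacc).re
      ≤ ((2 + t) * ((σB 0 0).re + (σB 1 1).re) + (1 + 2 / t) * (σB 2 2).re) / 4 := by
  have hblock : ∀ g, (blockG σ g).PosSemidef := fun g => hσ.submatrix _
  have hsum : ∀ v, ∑ g, quadForm (blockG σ g) v = quadForm (trB (U2 * inState σB * U2ᴴ)) v := by
    intro v
    rw [← show trG01 σ = _ from hOT, trG01_eq_sum_blockG, quadForm_sum]
  have hXor : ∀ g, quadForm (blockG σ g) chiXor = 0 := fun g =>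
    (Finset.sum_eq_zero_iff_of_nonneg fun g _ => (hblock g).quadForm_nonneg _).mp
      ((hsum chiXor).trans (quadForm_trB_chiXor σB)) g (Finset.mem_univ g)
  have hg : ∀ g, quadForm (blockG σ g) (ket g)
      ≤ ((2 + t) * (quadForm (blockG σ g) (chi 0) + quadForm (blockG σ g) (chi 1))
        + (1 + 2 / t) * quadForm (blockG σ g) (chi 2)) / 16 := by
    intro g
    rw [ket_eq_sum_chi, (hblock g).quadForm_add_of_quadForm_eq_zero
      (by rw [quadForm_smul, hXor, mul_zero]), Fin.sum_univ_three]
    refine ((hblock g).quadForm_add_add_le ht _ _ _).trans_eq ?_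
    simp only [quadForm_smul, normSq_chi_div_four]
    ring
  calc (hs σ Pacc).re = ∑ g, quadForm (blockG σ g) (ket g) := hσ.1.re_hs_Pacc
    _ ≤ _ := Finset.sum_le_sum fun g _ => hg g
    _ = _ := by
      simp only [← Finset.sum_div, Finset.sum_add_distrib, ← Finset.mul_sum, hsum,
        quadForm_trB_chi]
      ring

end ObliviousTransfer

section Value

def cheatValue (σ0 σ1 : Mat (Fin 3 × Fin 3)) (σ0w σ1w : Mat I5)
    (σOT : Mat (Fin 2 × Fin 2 × Fin 2 × Fin 2)) : ℂ :=
  (1/3 : ℂ) * ((1/2 : ℂ) * hs (outer (phi 0)) σ0 + (1/2 : ℂ) * hs (outer (phi 1)) σ1)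
    + (1/3 : ℂ) * ((1/2 : ℂ) * hs σ0w P0w + (1/2 : ℂ) * hs σ1w P1w)
    + (1/3 : ℂ) * hs σOT Pacc

theorem re_cheatValue (σ0 σ1 : Mat (Fin 3 × Fin 3)) (σ0w σ1w : Mat I5)
    (σOT : Mat (Fin 2 × Fin 2 × Fin 2 × Fin 2)) :
    (cheatValue σ0 σ1 σ0w σ1w σOT).re
      = ((hs (outer (phi 0)) σ0).re + (hs (outer (phi 1)) σ1).re
        + (hs σ0w P0w).re + (hs σ1w P1w).re) / 6 + (hs σOT Pacc).re / 3 := by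
  simp only [cheatValue, one_div, Complex.add_re, Complex.mul_re, Complex.inv_re, Complex.re_ofNat,
    Complex.normSq_ofNat, Complex.inv_im, Complex.im_ofNat, neg_zero, zero_div, zero_mul, sub_zero]
  ring

/-- The weights `t` are amplitude ratios at a near-optimal point (e.g. `(7/9)/(4/9)` for the
bit-commitment and oblivious-transfer terms), where the AM–GM steps are nearly tight. -/
theorem re_cheatValue_le {σ0 σ1 : Mat (Fin 3 × Fin 3)} {σ0w σ1w : Mat I5}
    {σOT : Mat (Fin 2 × Fin 2 × Fin 2 × Fin 2)} {σB : Mat (Fin 3)}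
    (h0 : σ0.PosSemidef) (h1 : σ1.PosSemidef) (h0w : σ0w.PosSemidef) (h1w : σ1w.PosSemidef)
    (hOTpsd : σOT.PosSemidef) (htr : σB.trace = 1) (hm0 : ptrA σ0 = σB) (hm1 : ptrA σ1 = σB)
    (hYA : trYA σ0w = trYA σ1w) (hB1 : trB1 (trYA σ0w) = σB) (hOT : OTconstraint σOT σB) :
    (cheatValue σ0 σ1 σ0w σ1w σOT).re ≤ 0.7178 := by
  have hBC0 := h0.re_hs_outer_phi_le (t := 8707 / 5000) (by norm_num) 0
  have hBC1 := h1.re_hs_outer_phi_le (t := 8707 / 5000) (by norm_num) 1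
  have hW0 := h0w.re_hs_P0w_le (t := 2261 / 2000) (by norm_num)
  have hW1 := h1w.re_hs_P1w_le (t := 23163 / 10000) (by norm_num)
  have hOTb := hOTpsd.re_hs_Pacc_le hOT (t := 8707 / 5000) (by norm_num)
  rw [hm0, f23_zero] at hBC0
  rw [hm1, f23_one] at hBC1
  rw [← hYA] at hW1
  have hrow : ∀ i, (σB i i).re = ∑ j, (trYA σ0w (i, j) (i, j)).re := fun i => by
    rw [← hB1, trB1, Complex.re_sum]
  have htr' : ∑ i, (σB i i).re = 1 := by
    rw [← Complex.re_sum]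
    exact congrArg Complex.re htr
  have hτ := h0w.re_trYA_apply_self_nonneg
  simp only [Fin.sum_univ_three] at hrow htr'
  rw [re_cheatValue]
  linarith [hrow 0, hrow 1, hrow 2, hτ (0, 0), hτ (0, 1), hτ (0, 2), hτ (1, 0), hτ (1, 1),
    hτ (1, 2), hτ (2, 0), hτ (2, 1), hτ (2, 2)]

end Value

section Witness

-- Since `2 (4/9)² + (7/9)² = 1` and `(49/234)² + (119/234)² = (7/9)² / 2`, all constraints hold
-- exactly with rational amplitudes.

def sigmaBWit : Mat (Fin 3) := diagonal ![(4 / 9) ^ 2, (4 / 9) ^ 2, (7 / 9) ^ 2]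

def bcWit : Fin 3 × Fin 3 → ℂ := (4 / 9 : ℂ) • (ket (0, 0) + ket (1, 1)) + (7 / 9 : ℂ) • ket (2, 2)

def wcfWit0 : I5 → ℂ :=
  (4 / 9 : ℂ) • (ket (0, 0, 0, 0, 2) + ket (1, 1, 1, 0, 2))
    + (119 / 234 : ℂ) • (ket (0, 2, 2, 0, 2) + ket (1, 2, 2, 0, 2))
    + (49 / 234 : ℂ) • (ket (0, 1, 2, 0, 0) + ket (1, 0, 2, 0, 1))

def wcfWit1 : I5 → ℂ :=
  (49 / 234 : ℂ) • (ket (0, 0, 2, 0, 0) + ket (1, 0, 2, 1, 1))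
    + (119 / 234 : ℂ) • (ket (0, 0, 2, 2, 2) + ket (1, 0, 2, 2, 2))
    + (4 / 9 : ℂ) • (ket (0, 1, 0, 0, 2) + ket (1, 1, 1, 0, 2))

def tauWit : Mat (Fin 3 × Fin 3) :=
  diagonal fun p => ![![0, 0, (4 / 9) ^ 2], ![0, 0, (4 / 9) ^ 2],
    ![(49 / 234) ^ 2, (49 / 234) ^ 2, 2 * (119 / 234) ^ 2]] p.1 p.2

def otWit (p : Fin 2 × Fin 2 × Fin 2 × Fin 2) : ℂ :=
  ∑ b, ![4 / 9, 4 / 9, 7 / 9] b * chi b (p.1, p.2.1) * chi b p.2.2 / 4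

theorem isDensity_sigmaBWit : IsDensity sigmaBWit := by
  refine ⟨posSemidef_diagonal_iff.mpr fun i => ?_, ?_⟩
  · fin_cases i <;> simp [Complex.nonneg_iff] <;> norm_num
  · simp [sigmaBWit, trace, Fin.sum_univ_three]
    norm_num

theorem bcWit_dotProduct_star : bcWit ⬝ᵥ star bcWit = 1 := by
  simp [dotProduct, bcWit, ket, Fintype.sum_prod_type, Fin.sum_univ_three, map_ofNat]
  norm_num

theorem wcfWit0_dotProduct_star : wcfWit0 ⬝ᵥ star wcfWit0 = 1 := by
  simp [dotProduct, wcfWit0, ket, Fintype.sum_prod_type, Fin.sum_univ_three, Fin.sum_univ_two,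
    map_ofNat]
  norm_num

theorem wcfWit1_dotProduct_star : wcfWit1 ⬝ᵥ star wcfWit1 = 1 := by
  simp [dotProduct, wcfWit1, ket, Fintype.sum_prod_type, Fin.sum_univ_three, Fin.sum_univ_two,
    map_ofNat]
  norm_num

theorem otWit_dotProduct_star : otWit ⬝ᵥ star otWit = 1 := by
  simp [dotProduct, otWit, chi, Udiag, Fintype.sum_prod_type, Fin.sum_univ_three, Fin.sum_univ_two]
  norm_num

theorem ptrA_outer_bcWit : ptrA (outer bcWit) = sigmaBWit := by
  ext i j
  fin_cases i <;> fin_cases j <;> simp [ptrA, outer, bcWit, sigmaBWit, ket, map_ofNat] <;> norm_num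

theorem trYA_outer_wcfWit0 : trYA (outer wcfWit0) = tauWit := by
  ext ⟨b0, b1⟩ ⟨b0', b1'⟩
  fin_cases b0 <;> fin_cases b1 <;> fin_cases b0' <;> fin_cases b1' <;>
    simp [trYA, outer, wcfWit0, tauWit, ket, Fin.sum_univ_three, Fin.sum_univ_two, map_ofNat] <;>
    norm_num

theorem trYA_outer_wcfWit1 : trYA (outer wcfWit1) = tauWit := by
  ext ⟨b0, b1⟩ ⟨b0', b1'⟩
  fin_cases b0 <;> fin_cases b1 <;> fin_cases b0' <;> fin_cases b1' <;>
    simp [trYA, outer, wcfWit1, tauWit, ket, Fin.sum_univ_three, Fin.sum_univ_two, map_ofNat] <;>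
    norm_num

theorem trB1_tauWit : trB1 tauWit = sigmaBWit := by
  ext i j
  fin_cases i <;> fin_cases j <;> simp [trB1, tauWit, sigmaBWit, Fin.sum_univ_three]
  all_goals norm_num

theorem OTconstraint_otWit : OTconstraint (outer otWit) sigmaBWit := by
  rw [OTconstraint, trB_U2_inState]
  ext ⟨x0, x1⟩ ⟨x0', x1'⟩
  fin_cases x0 <;> fin_cases x1 <;> fin_cases x0' <;> fin_cases x1' <;>
    simp [trG01, outer, otWit, sigmaBWit, chi, Udiag, Fin.sum_univ_three, Fin.sum_univ_two] <;>
    norm_num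

theorem re_hs_outer_phi_bcWit (y : Fin 2) : (hs (outer (phi y)) (outer bcWit)).re = 121 / 162 := by
  rw [re_hs_outer_left, phi_eq_plusVec, quadForm_outer, dotProduct_plusVec, map_mul,
    normSq_inv_sqrt_two]
  fin_cases y <;> simp [bcWit, ket, Complex.normSq_apply] <;> norm_num

theorem re_hs_outer_wcfWit0 : (hs (outer wcfWit0) P0w).re = (4 / 9 + 119 / 234) ^ 2 := by
  rw [P0w_eq_plusProj, re_hs_outer_plusProj]
  simp [wcfWit0, ket, Fintype.sum_prod_type, Fin.sum_univ_three, Fin.sum_univ_two,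
    Complex.normSq_apply]
  norm_num

theorem re_hs_outer_wcfWit1 : (hs (outer wcfWit1) P1w).re = (49 / 234 + 119 / 234) ^ 2 := by
  rw [P1w_eq_plusProj, re_hs_outer_plusProj]
  simp [wcfWit1, ket, Fintype.sum_prod_type, Fin.sum_univ_three, Fin.sum_univ_two,
    Complex.normSq_apply]
  norm_num

theorem re_hs_outer_otWit : (hs (outer otWit) Pacc).re = 25 / 36 := by
  rw [re_hs_outer_left, Pacc_eq_sum_outer, quadForm_sum]
  simp [quadForm_outer, ket_eq_single, otWit, chi, Udiag, Fintype.sum_prod_type,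
    Fin.sum_univ_three, Fin.sum_univ_two, Complex.normSq_apply]
  norm_num

theorem re_cheatValue_wit :
    (cheatValue (outer bcWit) (outer bcWit) (outer wcfWit0) (outer wcfWit1) (outer otWit)).re
      = 235799 / 328536 := by
  rw [re_cheatValue, re_hs_outer_phi_bcWit, re_hs_outer_phi_bcWit, re_hs_outer_wcfWit0,
    re_hs_outer_wcfWit1, re_hs_outer_otWit]
  norm_num

end Witness

theorem exists_isLUB_of_mem_of_forall_le {S : Set ℝ} {a b : ℝ} (ha : a ∈ S)
    (hb : ∀ x ∈ S, x ≤ b) : ∃ v, IsLUB S v ∧ a ≤ v ∧ v ≤ b :=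
  ⟨sSup S, isLUB_csSup ⟨a, ha⟩ ⟨b, hb⟩, le_csSup ⟨b, hb⟩ ha, csSup_le ⟨a, ha⟩ hb⟩

theorem bc_wcf_ot_switch_cheating_Alice :
    ∃ v : ℝ,
      IsLUB
        {x : ℝ | ∃ (σ0 σ1 : Mat (Fin 3 × Fin 3)) (σ0w σ1w : Mat I5)
            (σOT : Mat (Fin 2 × Fin 2 × Fin 2 × Fin 2)) (σB : Mat (Fin 3)),
          IsDensity σ0 ∧ IsDensity σ1 ∧ IsDensity σ0w ∧ IsDensity σ1w ∧
          IsDensity σOT ∧ IsDensity σB ∧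
          ptrA σ0 = σB ∧ ptrA σ1 = σB ∧
          trYA σ0w = trYA σ1w ∧ trB1 (trYA σ0w) = σB ∧
          OTconstraint σOT σB ∧
          x = ((1/3 : ℂ) * ((1/2 : ℂ) * hs (outer (phi 0)) σ0
                + (1/2 : ℂ) * hs (outer (phi 1)) σ1)
              + (1/3 : ℂ) * ((1/2 : ℂ) * hs σ0w P0w
                + (1/2 : ℂ) * hs σ1w P1w)
              + (1/3 : ℂ) * hs σOT Pacc).re}
        v
      ∧ (0.7177 : ℝ) ≤ v ∧ v ≤ (0.7178 : ℝ) ∧ v < 3/4 := by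
  refine (exists_isLUB_of_mem_of_forall_le (a := 235799 / 328536) (b := 0.7178) ?_ ?_).imp
    fun v ⟨hv, hlo, hhi⟩ => ⟨hv, le_trans (by norm_num) hlo, hhi, hhi.trans_lt (by norm_num)⟩
  · exact ⟨outer bcWit, outer bcWit, outer wcfWit0, outer wcfWit1, outer otWit, sigmaBWit,
      isDensity_outer bcWit_dotProduct_star, isDensity_outer bcWit_dotProduct_star,
      isDensity_outer wcfWit0_dotProduct_star, isDensity_outer wcfWit1_dotProduct_star,
      isDensity_outer otWit_dotProduct_star, isDensity_sigmaBWit,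
      ptrA_outer_bcWit, ptrA_outer_bcWit, trYA_outer_wcfWit0.trans trYA_outer_wcfWit1.symm,
      by rw [trYA_outer_wcfWit0, trB1_tauWit], OTconstraint_otWit, re_cheatValue_wit.symm⟩
  · rintro x ⟨σ0, σ1, σ0w, σ1w, σOT, σB, hd0, hd1, hd0w, hd1w, hdOT, hdB, hm0, hm1, hYA, hB1,
      hOT, rfl⟩
    exact re_cheatValue_le hd0.1 hd1.1 hd0w.1 hd1w.1 hdOT.1 hdB.2 hm0 hm1 hYA hB1 hOT

end
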